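/- More generally, if d^λ_{μν} are the structure constants of g_μ g_ν = Σ_λ d^λ_{μν} g_λ, then for every t, t^{c(μ)+c(ν)} = Σ_λ d^λ_{μν} t^{c(λ)}, where c(λ) denotes the number of columns of λ (i.e., λ₁). -/

import Mathlib

/- Common combinatorial definitions: partitions (as weakly decreasing, eventually
zero functions ℕ → ℕ), skew shapes, cells, and reverse plane partitions. -/

open scoped Classical

noncomputable section

/-- `f : ℕ → ℕ` is a partition: weakly decreasing and eventually zero. -/
def IsPartition (f : ℕ → ℕ) : Prop :=
  (∀ ⦃i j : ℕ⦄, i ≤ j → f j ≤ f i) ∧ ∃ N, ∀ n, N ≤ n → f n = 0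

/-- the empty partition -/
def zeroPart : ℕ → ℕ := fun _ => 0

/-- containment of Young diagrams: `μ ⊆ λ`. -/
def SubShape (μ lam : ℕ → ℕ) : Prop := ∀ i, μ i ≤ lam i

/-- `(i, j)` is a cell (row `i`, column `j`, 0-indexed) of the skew shape `λ/μ`. -/
def Cell (μ lam : ℕ → ℕ) (i j : ℕ) : Prop := μ i ≤ j ∧ j < lam i

/-- A reverse plane partition of shape `λ/μ`: entries are positive integers on the
cells of `λ/μ` (recorded as `0` off the shape), weakly increasing along each row and
each column. -/
def IsRPP (μ lam : ℕ → ℕ) (T : ℕ → ℕ → ℕ) : Prop :=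
  (∀ i j, Cell μ lam i j → 1 ≤ T i j) ∧
  (∀ i j, ¬ Cell μ lam i j → T i j = 0) ∧
  (∀ i j, Cell μ lam i j → Cell μ lam i (j + 1) → T i j ≤ T i (j + 1)) ∧
  (∀ i j, Cell μ lam i j → Cell μ lam (i + 1) j → T i j ≤ T (i + 1) j)

variable (K : Type*) [CommRing K]

/-- number of columns of the reverse plane partition `T` (of shape `λ/μ`) containing `k`. -/
def colCount (μ lam : ℕ → ℕ) (T : ℕ → ℕ → ℕ) (k : ℕ) : ℕ :=
  Set.ncard {j : ℕ | ∃ i, Cell μ lam i j ∧ T i j = k}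

/-- `c(λ/μ)`: the number of nonempty columns of the skew shape `λ/μ`. -/
def nCols (μ lam : ℕ → ℕ) : ℕ := Set.ncard {j : ℕ | ∃ i, Cell μ lam i j}

/-- `|λ/μ|`: the number of boxes of the skew shape `λ/μ`. -/
def skewSize (μ lam : ℕ → ℕ) : ℕ := ∑ᶠ i : ℕ, (lam i - μ i)

/-- The dual stable Grothendieck polynomial `g_{λ/μ} = Σ_T x^T`, as a formal power
series in the variables `x_0, x_1, x_2, …`: the coefficient of the monomial `x^d`
is the number of reverse plane partitions `T` of shape `λ/μ` such that, for every
`k`, the number of columns of `T` containing the entry `k + 1` is `d k`. -/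
def gP (μ lam : ℕ → ℕ) : MvPowerSeries ℕ K :=
  fun d => (Nat.card {T : ℕ → ℕ → ℕ //
    IsRPP μ lam T ∧ ∀ k : ℕ, colCount μ lam T (k + 1) = d k} : K)

/-!
Setting `x₀ = t` and all other variables to `0` sends `g_{λ/μ}` to `t ^ c(λ/μ)`: a reverse plane
partition with all entries equal to `1` is the only one avoiding the larger entries, and its
weight is `x₀ ^ c(λ/μ)`. Applying this ring homomorphism to `g_μ g_ν = Σ d^λ_{μν} g_λ` gives the
claim, first as an identity of power series in `x₀` and then, as both sides are polynomials,
at every `t`.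
-/

section ReversePlanePartition

variable {μ lam : ℕ → ℕ}

lemma Cell.lt_apply_zero (hlam : IsPartition lam) {i j : ℕ} (h : Cell μ lam i j) : j < lam 0 :=
  h.2.trans_le (hlam.1 (Nat.zero_le i))

lemma colCount_eq_zero_iff (hlam : IsPartition lam) {T : ℕ → ℕ → ℕ} {k : ℕ} :
    colCount μ lam T k = 0 ↔ ∀ i j, Cell μ lam i j → T i j ≠ k := by
  have hfin : {j : ℕ | ∃ i, Cell μ lam i j ∧ T i j = k}.Finite :=
    (Set.finite_Iio (lam 0)).subset fun j ⟨_, hc, _⟩ => hc.lt_apply_zero hlam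
  rw [colCount, Set.ncard_eq_zero hfin, Set.eq_empty_iff_forall_notMem]
  exact ⟨fun h i j hc hT => h j ⟨i, hc, hT⟩, fun h j ⟨i, hc, hT⟩ => h i j hc hT⟩

lemma nCols_zeroPart (hlam : IsPartition lam) : nCols zeroPart lam = lam 0 := by
  have hcols : {j : ℕ | ∃ i, Cell zeroPart lam i j} = Set.Iio (lam 0) :=
    Set.ext fun j => ⟨fun ⟨_, hc⟩ => hc.lt_apply_zero hlam, fun hj => ⟨0, Nat.zero_le j, hj⟩⟩
  rw [nCols, hcols, ← Finset.coe_range, Set.ncard_coe_finset, Finset.card_range]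

def allOnes (μ lam : ℕ → ℕ) : ℕ → ℕ → ℕ := fun i j => if Cell μ lam i j then 1 else 0

lemma isRPP_allOnes : IsRPP μ lam (allOnes μ lam) := by
  refine ⟨fun i j hc => ?_, fun i j hc => ?_, fun i j hc hc' => ?_, fun i j hc hc' => ?_⟩ <;>
    simp [allOnes, *]

lemma colCount_allOnes_one : colCount μ lam (allOnes μ lam) 1 = nCols μ lam := by
  rw [colCount, nCols]
  congr 1
  ext j
  exact exists_congr fun i => and_iff_left_of_imp fun hc => if_pos hc

lemma eq_allOnes_iff (hlam : IsPartition lam) {T : ℕ → ℕ → ℕ} (hT : IsRPP μ lam T) :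
    T = allOnes μ lam ↔ ∀ k, colCount μ lam T (k + 2) = 0 := by
  simp only [colCount_eq_zero_iff hlam]
  constructor
  · rintro rfl k i j hc
    simp [allOnes, hc]
  · intro h
    funext i j
    by_cases hc : Cell μ lam i j
    · have hpos : 1 ≤ T i j := hT.1 i j hc
      have hsmall : ∀ k, T i j ≠ k + 2 := fun k => h k i j hc
      simp only [allOnes, hc, if_true]
      by_contra hne
      exact hsmall (T i j - 2) (by omega)
    · simp [allOnes, hc, hT.2.1 i j hc]

lemma isRPP_and_colCount_eq_single_iff (hlam : IsPartition lam) {T : ℕ → ℕ → ℕ} {n : ℕ} :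
    (IsRPP μ lam T ∧ ∀ k, colCount μ lam T (k + 1) = Finsupp.single 0 n k) ↔
      T = allOnes μ lam ∧ n = nCols μ lam := by
  have hsplit : (∀ k, colCount μ lam T (k + 1) = Finsupp.single 0 n k) ↔
      colCount μ lam T 1 = n ∧ ∀ k, colCount μ lam T (k + 2) = 0 := by
    refine ⟨fun h => ⟨by simpa using h 0, fun k => by simpa using h (k + 1)⟩, ?_⟩
    rintro ⟨h1, h2⟩ (_ | k)
    · simpa using h1
    · simpa using h2 k
  rw [hsplit]
  constructor
  · rintro ⟨hT, h1, h2⟩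
    obtain rfl := (eq_allOnes_iff hlam hT).2 h2
    exact ⟨rfl, h1.symm.trans colCount_allOnes_one⟩
  · rintro ⟨rfl, rfl⟩
    exact ⟨isRPP_allOnes, colCount_allOnes_one, (eq_allOnes_iff hlam isRPP_allOnes).1 rfl⟩

end ReversePlanePartition

lemma coeff_single_zero_gP {μ lam : ℕ → ℕ} (hlam : IsPartition lam) (n : ℕ) :
    MvPowerSeries.coeff (Finsupp.single 0 n) (gP K μ lam) = if n = nCols μ lam then 1 else 0 := by
  rw [MvPowerSeries.coeff_apply, gP]
  simp only [isRPP_and_colCount_eq_single_iff hlam]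
  split_ifs with h <;> simp [h]

lemma killCompl_punit_gP {μ lam : ℕ → ℕ} (hlam : IsPartition lam) :
    MvPowerSeries.killCompl (Function.Embedding.punit 0) (gP K μ lam) =
      (PowerSeries.X ^ nCols μ lam : PowerSeries K) := by
  ext n
  rw [PowerSeries.coeff_X_pow, ← PowerSeries.coeff_coeToMvPowerSeries,
    MvPowerSeries.coeff_killCompl, Finsupp.embDomain_single]
  exact coeff_single_zero_gP K hlam n

lemma killCompl_punit_gP_zeroPart {lam : ℕ → ℕ} (hlam : IsPartition lam) :
    MvPowerSeries.killCompl (Function.Embedding.punit 0) (gP K zeroPart lam) =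
      (PowerSeries.X ^ lam 0 : PowerSeries K) := by
  rw [killCompl_punit_gP K hlam, nCols_zeroPart hlam]

lemma PowerSeries.pow_eq_finsum_of_X_pow_eq_finsum {R ι : Type*} [CommRing R] {a : ℕ}
    {c : ι → R} {e : ι → ℕ} (hc : c.support.Finite)
    (h : (X ^ a : PowerSeries R) = ∑ᶠ i, c i • X ^ e i) (t : R) :
    t ^ a = ∑ᶠ i, c i * t ^ e i := by
  have hsupp : (Function.support fun i => c i • (Polynomial.X : Polynomial R) ^ e i).Finite :=
    hc.subset (Function.support_smul_subset_left c _)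
  have hpoly : (Polynomial.X ^ a : Polynomial R) = ∑ᶠ i, c i • Polynomial.X ^ e i := by
    apply Polynomial.coe_injective
    have hcoe := map_finsum Polynomial.coeToPowerSeries.ringHom hsupp
    simp only [Polynomial.coeToPowerSeries.ringHom_apply] at hcoe
    rw [hcoe]
    simpa [Polynomial.smul_eq_C_mul, PowerSeries.smul_eq_C_mul] using h
  have heval := congrArg (Polynomial.evalRingHom t) hpoly
  rw [map_finsum _ hsupp] at heval
  simpa using heval

/-- If `d^λ_{μν}` are the structure constants of
`g_μ g_ν = Σ_λ d^λ_{μν} g_λ`, then for every `t`,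
`t^{c(μ)+c(ν)} = Σ_λ d^λ_{μν} t^{c(λ)}`, where `c(λ) = λ₁` is the number of
columns of `λ`. -/
theorem sum_structure_constants_columns (μ ν : ℕ → ℕ)
    (hμ : IsPartition μ) (hν : IsPartition ν)
    (d : (ℕ → ℕ) → K)
    (hfin : (Function.support d).Finite)
    (hpart : ∀ lam, d lam ≠ 0 → IsPartition lam)
    (hexp : gP K zeroPart μ * gP K zeroPart ν =
      ∑ᶠ lam : ℕ → ℕ, d lam • gP K zeroPart lam) :
    ∀ t : K, t ^ (μ 0 + ν 0) = ∑ᶠ lam : ℕ → ℕ, d lam * t ^ (lam 0) := by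
  intro t
  have hsupp : (Function.support fun lam => d lam • gP K zeroPart lam).Finite :=
    hfin.subset (Function.support_smul_subset_left d _)
  have hX := congrArg (MvPowerSeries.killCompl (R := K) (Function.Embedding.punit 0)) hexp
  rw [map_mul, map_finsum _ hsupp, killCompl_punit_gP_zeroPart K hμ,
    killCompl_punit_gP_zeroPart K hν, ← pow_add] at hX
  refine PowerSeries.pow_eq_finsum_of_X_pow_eq_finsum hfin (hX.trans (finsum_congr fun lam => ?_)) t
  by_cases hd : d lam = 0
  · simp [hd]
  · rw [map_smul, killCompl_punit_gP_zeroPart K (hpart lam hd)]
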